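/- Let z ∈ ℝ, let g be a real polynomial with g(z) ≠ 0, let k < p be natural numbers, let α : ℕ → ℝ satisfy α_{k+1} ≠ 0, and let f(ξ) = Σ_{m=k+1}^{p} α_m ξ^m. Then, as δ → 0⁺, the squared L² norm ∫_z^{z+δ}∫_0^δ (g(ξ₁))²(f(ξ₂))² dξ₂ dξ₁ is Θ(δ^{2k+4}). -/

import Mathlib

/-!
The integrand factors, so the double integral is `A δ * B δ` with `A δ = ∫_z^{z+δ} g²` and
`B δ = ∫_0^δ f²`. By the fundamental theorem of calculus `A δ ~ g(z)² δ`. Near `0` the lowest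
term dominates, `f ξ =Θ ξ^{k+1}`, so `f² =Θ ξ^{2k+2}`; since `f² ≥ 0`, integrating the
two-sided bounds gives `B δ =Θ δ^{2k+3}`.
-/

open Topology Asymptotics Polynomial
open Filter Set MeasureTheory intervalIntegral

theorem isTheta_intervalIntegral_of_continuous {u : ℝ → ℝ} {z : ℝ} (hu : Continuous u)
    (hz : u z ≠ 0) : (fun δ => ∫ x in z..z + δ, u x) =Θ[𝓝 0] fun δ => δ := by
  have hF : HasDerivAt (fun δ => ∫ x in z..z + δ, u x) (u z) 0 := by
    have hright := integral_hasDerivAt_right (hu.intervalIntegrable z (z + 0))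
      (hu.stronglyMeasurableAtFilter _ _) hu.continuousAt
    simpa [Function.comp_def] using hright.comp (0 : ℝ) ((hasDerivAt_id (0 : ℝ)).const_add z)
  have hpair : Tendsto (fun δ : ℝ => (δ, (0 : ℝ))) (𝓝 0) (𝓝 0 ×ˢ pure 0) :=
    tendsto_id.prodMk tendsto_const_pure
  obtain ⟨hO, hO'⟩ := hF.isTheta_sub hz
  constructor
  · simpa [Function.comp_def] using hO.comp_tendsto hpair
  · simpa [Function.comp_def] using hO'.comp_tendsto hpair

theorem isBigO_intervalIntegral_of_isBigO {u v : ℝ → ℝ} (hv : LocallyIntegrable v)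
    (hv0 : ∀ᶠ x in 𝓝[>] 0, 0 ≤ v x) (h : u =O[𝓝[>] 0] v) :
    (fun δ => ∫ x in 0..δ, u x) =O[𝓝[>] 0] fun δ => ∫ x in 0..δ, v x := by
  obtain ⟨C, hC0, hC⟩ := h.exists_nonneg
  obtain ⟨b, hb, hbound⟩ := mem_nhdsGT_iff_exists_Ioo_subset.1 (hC.bound.and hv0)
  refine IsBigO.of_bound C ?_
  filter_upwards [Ioo_mem_nhdsGT hb] with δ hδ
  have hle : ∀ x ∈ Ioc 0 δ, ‖u x‖ ≤ C * v x := fun x hx => by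
    obtain ⟨hux, hvx⟩ := hbound ⟨hx.1, hx.2.trans_lt hδ.2⟩
    simpa [Real.norm_of_nonneg hvx] using hux
  calc ‖∫ x in 0..δ, u x‖ ≤ ∫ x in 0..δ, C * v x :=
        norm_integral_le_of_norm_le hδ.1.le (ae_of_all _ hle)
          ((hv.integrableOn_isCompact isCompact_uIcc).intervalIntegrable.const_mul C)
    _ = C * ∫ x in 0..δ, v x := integral_const_mul C v
    _ ≤ C * ‖∫ x in 0..δ, v x‖ := by gcongr; exact le_abs_self _

theorem isTheta_intervalIntegral_of_isTheta_pow {u : ℝ → ℝ} {n : ℕ} (hu : LocallyIntegrable u)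
    (hu0 : ∀ᶠ x in 𝓝[>] 0, 0 ≤ u x) (h : u =Θ[𝓝[>] 0] fun x => x ^ n) :
    (fun δ => ∫ x in 0..δ, u x) =Θ[𝓝[>] 0] fun δ => δ ^ (n + 1) := by
  have hpow_nonneg : ∀ᶠ x in 𝓝[>] (0 : ℝ), 0 ≤ x ^ n :=
    eventually_nhdsWithin_of_forall fun x hx => pow_nonneg (le_of_lt hx) n
  have hpow : (fun δ => ∫ x in (0 : ℝ)..δ, x ^ n) =Θ[𝓝[>] 0] fun δ => δ ^ (n + 1) := by
    simp only [integral_pow, zero_pow n.succ_ne_zero, sub_zero, div_eq_inv_mul]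
    exact (isTheta_refl _ _).const_mul_left (by positivity)
  refine IsTheta.trans ⟨?_, ?_⟩ hpow
  · exact isBigO_intervalIntegral_of_isBigO (continuous_pow n).locallyIntegrable hpow_nonneg h.1
  · exact isBigO_intervalIntegral_of_isBigO hu hu0 h.2

theorem isTheta_sum_pow_of_lowest {𝕜 : Type*} [NormedField 𝕜] {s : Finset ℕ} {c : ℕ → 𝕜}
    {n : ℕ} (hn : n ∈ s) (hlow : ∀ m ∈ s, n ≤ m) (hc : c n ≠ 0) :
    (fun x : 𝕜 => ∑ m ∈ s, c m * x ^ m) =Θ[𝓝 0] fun x => x ^ n := by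
  simp_rw [← Finset.add_sum_erase s _ hn]
  refine ((isTheta_refl _ _).const_mul_left hc).add_isLittleO (IsLittleO.fun_sum fun m hm => ?_)
  have hnm : n < m :=
    (hlow m (Finset.mem_of_mem_erase hm)).lt_of_ne (Finset.ne_of_mem_erase hm).symm
  exact (isLittleO_pow_pow hnm).const_mul_left (c m)

/-- Configuration (b): for `φ(ξ₁,ξ₂) = g(ξ₁) f(ξ₂)` with `g(z) ≠ 0` and
`f(ξ) = ∑_{m=k+1}^{p} α_m ξ^m`, `α_{k+1} ≠ 0`, the squared `L²` norm of `φ` on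
`[z,z+δ] × [0,δ]` is `Θ(δ^{2k+4})` as `δ → 0⁺`. -/
theorem l2_norm_asymptotics_config_b (z : ℝ)
    (g : Polynomial ℝ) (hg : g.eval z ≠ 0)
    (k p : ℕ) (hkp : k < p) (α : ℕ → ℝ) (hα : α (k + 1) ≠ 0) :
    (fun δ : ℝ => ∫ ξ₁ in z..(z + δ), ∫ ξ₂ in (0:ℝ)..δ,
        (g.eval ξ₁) ^ 2 * (∑ m ∈ Finset.Icc (k + 1) p, α m * ξ₂ ^ m) ^ 2)
      =Θ[𝓝[>] (0:ℝ)] (fun δ : ℝ => δ ^ (2 * k + 4)) := by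
  set f : ℝ → ℝ := fun ξ => ∑ m ∈ Finset.Icc (k + 1) p, α m * ξ ^ m
  have hf : f =Θ[𝓝 0] fun ξ => ξ ^ (k + 1) :=
    isTheta_sum_pow_of_lowest (by simpa using hkp) (fun m hm => (Finset.mem_Icc.1 hm).1) hα
  have hA : (fun δ => ∫ ξ in z..z + δ, g.eval ξ ^ 2) =Θ[𝓝[>] 0] fun δ => δ :=
    (isTheta_intervalIntegral_of_continuous (g.continuous.pow 2) (pow_ne_zero 2 hg)).mono
      nhdsWithin_le_nhds
  have hB : (fun δ => ∫ ξ in 0..δ, f ξ ^ 2) =Θ[𝓝[>] 0] fun δ => δ ^ ((k + 1) * 2 + 1) := by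
    refine isTheta_intervalIntegral_of_isTheta_pow
      (by fun_prop : Continuous fun ξ => f ξ ^ 2).locallyIntegrable
      (Eventually.of_forall fun ξ => sq_nonneg (f ξ)) ?_
    simpa only [← pow_mul] using (hf.pow 2).mono nhdsWithin_le_nhds
  calc _ = fun δ => (∫ ξ in z..z + δ, g.eval ξ ^ 2) * ∫ ξ in 0..δ, f ξ ^ 2 := by
        funext δ
        simp_rw [intervalIntegral.integral_const_mul]
        rw [intervalIntegral.integral_mul_const]
    _ =Θ[𝓝[>] 0] fun δ => δ * δ ^ ((k + 1) * 2 + 1) := hA.mul hB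
    _ = fun δ => δ ^ (2 * k + 4) := by funext δ; ring
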